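/- Let T > 0 and let Θ : [0,T] × ℝ² → ℂ be measurable with M := sup_{0≤t≤T} ‖Θ(t)‖_{X⁰} < ∞ and I := ∫₀^T ‖Θ(t)‖_{X¹} dt < ∞. Then ∫₀^T ∫_{ℝ²} |ξ| · | ∫₀^t e^{−(t−z)|ξ|} N[Θ](z,ξ) dz | dξ dt ≤ M · I. -/

import Mathlib

/-! Since `ξ₁η₂ − ξ₂η₁ = (ξ − η)₁η₂ − (ξ − η)₂η₁`, the kernel of `N[Θ]` has modulus at most
`|ξ − η|`, so `|N[Θ](z, ξ)|` is dominated by the convolution of `|Θ(z)|` with `|·| |Θ(z)|`,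
whose integral over `ξ` is `‖Θ(z)‖_{X⁰} ‖Θ(z)‖_{X¹}`. The weight `|ξ| e^{-(t-z)|ξ|} 1_{z ≤ t}`
is the exponential density of rate `|ξ|` at `t - z`, so integrating it in `t` costs at most `1`.
After Tonelli the left side is therefore at most `∫₀^T ‖Θ(z)‖_{X⁰} ‖Θ(z)‖_{X¹} dz ≤ M I`. -/

open MeasureTheory Filter
open scoped ENNReal NNReal

noncomputable section

abbrev E2 : Type := EuclideanSpace ℝ (Fin 2)

/-- Fourier-side `X^σ` norm: `∫ |ξ|^σ |g ξ| dξ` (valued in `ℝ≥0∞`). -/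
def Xnorm (σ : ℝ) (g : E2 → ℂ) : ℝ≥0∞ :=
  ∫⁻ ξ : E2, ENNReal.ofReal (‖ξ‖ ^ σ) * ‖g ξ‖₊

/-- Fourier-side quasi-geostrophic nonlinearity `N[Θ]`. -/
def QGN (Θ : ℝ → E2 → ℂ) (z : ℝ) (ξ : E2) : ℂ :=
  ∫ η : E2, (((ξ 0 * η 1 - ξ 1 * η 0) / ‖η‖ : ℝ) : ℂ) * Θ z (ξ - η) * Θ z η

/-- `Θ` is a mild solution on `[0,T]` with data `Θ₀`. -/
def IsMildSolutionOn (Θ : ℝ → E2 → ℂ) (Θ₀ : E2 → ℂ) (T : ℝ) : Prop :=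
  ∀ t ∈ Set.Icc (0:ℝ) T, ∀ᵐ ξ : E2 ∂volume, Θ t ξ =
    ((Real.exp (-(t * ‖ξ‖)) : ℝ) : ℂ) * Θ₀ ξ +
    ∫ z in (0:ℝ)..t, ((Real.exp (-((t - z) * ‖ξ‖)) : ℝ) : ℂ) * QGN Θ z ξ

/-- `Θ` is a global mild solution with data `Θ₀`. -/
def IsGlobalMildSolution (Θ : ℝ → E2 → ℂ) (Θ₀ : E2 → ℂ) : Prop :=
  ∀ t : ℝ, 0 ≤ t → ∀ᵐ ξ : E2 ∂volume, Θ t ξ =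
    ((Real.exp (-(t * ‖ξ‖)) : ℝ) : ℂ) * Θ₀ ξ +
    ∫ z in (0:ℝ)..t, ((Real.exp (-((t - z) * ‖ξ‖)) : ℝ) : ℂ) * QGN Θ z ξ

/-- `Θ ∈ C_b([0,∞), X^σ)`: bounded `X^σ` norm and `L¹`-continuity of `t ↦ |·|^σ Θ(t,·)`. -/
def CbX (σ : ℝ) (Θ : ℝ → E2 → ℂ) : Prop :=
  (⨆ t ∈ Set.Ici (0:ℝ), Xnorm σ (Θ t)) < ⊤ ∧
  ∀ t ∈ Set.Ici (0:ℝ),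
    Tendsto (fun s => ∫⁻ ξ : E2, ENNReal.ofReal (‖ξ‖ ^ σ) * ‖Θ s ξ - Θ t ξ‖₊)
      (nhdsWithin t (Set.Ici 0)) (nhds 0)

open Set ProbabilityTheory

theorem lintegral_lintegral_lintegral_reverse {α β γ : Type*} [MeasurableSpace α]
    [MeasurableSpace β] [MeasurableSpace γ] {μ : Measure α} {ν : Measure β} {ρ : Measure γ}
    [SFinite μ] [SFinite ν] [SFinite ρ] {f : α → β → γ → ℝ≥0∞}
    (hf : Measurable fun p : α × β × γ => f p.1 p.2.1 p.2.2) :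
    ∫⁻ a, ∫⁻ b, ∫⁻ c, f a b c ∂ρ ∂ν ∂μ = ∫⁻ c, ∫⁻ b, ∫⁻ a, f a b c ∂μ ∂ν ∂ρ := by
  have hf' : ∀ a, Measurable (Function.uncurry (f a)) := fun a =>
    hf.comp (measurable_const.prodMk measurable_id)
  calc ∫⁻ a, ∫⁻ b, ∫⁻ c, f a b c ∂ρ ∂ν ∂μ = ∫⁻ a, ∫⁻ c, ∫⁻ b, f a b c ∂ν ∂ρ ∂μ :=
        lintegral_congr fun a => lintegral_lintegral_swap (hf' a).aemeasurable
    _ = ∫⁻ c, ∫⁻ a, ∫⁻ b, f a b c ∂ν ∂μ ∂ρ := by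
        refine lintegral_lintegral_swap (Measurable.aemeasurable ?_)
        exact Measurable.lintegral_prod_right'
          (hf.comp (measurable_fst.fst.prodMk (measurable_snd.prodMk measurable_fst.snd)))
    _ = ∫⁻ c, ∫⁻ b, ∫⁻ a, f a b c ∂μ ∂ν ∂ρ := by
        refine lintegral_congr fun c => lintegral_lintegral_swap (Measurable.aemeasurable ?_)
        exact hf.comp (measurable_fst.prodMk (measurable_snd.prodMk (measurable_const (a := c))))

theorem lintegral_lconvolution {G : Type*} [MeasurableSpace G] [AddGroup G] [MeasurableAdd₂ G]
    [MeasurableNeg G] {μ : Measure G} [SFinite μ] [μ.IsAddLeftInvariant] {f g : G → ℝ≥0∞}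
    (hf : Measurable f) (hg : Measurable g) :
    ∫⁻ x, (f ⋆ₗ[μ] g) x ∂μ = (∫⁻ x, f x ∂μ) * ∫⁻ x, g x ∂μ := by
  simp only [lconvolution_def]
  rw [lintegral_lintegral_swap
    ((hf.comp measurable_snd).mul (hg.comp (measurable_snd.neg.add measurable_fst))).aemeasurable]
  have hinner : ∀ y, ∫⁻ x, f y * g (-y + x) ∂μ = f y * ∫⁻ x, g x ∂μ := fun y => by
    rw [lintegral_const_mul _ (f := fun x => g (-y + x)) (hg.comp (measurable_const_add _)),
      lintegral_add_left_eq_self]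
  rw [lintegral_congr hinner, lintegral_mul_const _ hf]

theorem measurable_uncurry_exponentialPDF : Measurable (Function.uncurry exponentialPDF) := by
  simp only [Function.uncurry_def, exponentialPDF_eq]
  exact (Measurable.ite (measurableSet_le measurable_const measurable_snd) (by fun_prop)
    measurable_const).ennreal_ofReal

theorem setLIntegral_exponentialPDF_sub_mul_le (s : Set ℝ) {r : ℝ} (hr : 0 ≤ r) (z : ℝ)
    (c : ℝ≥0∞) : ∫⁻ t in s, exponentialPDF r (t - z) * c ≤ c := by
  have hmeas : Measurable fun t => exponentialPDF r (t - z) :=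
    (measurable_exponentialPDFReal r).ennreal_ofReal.comp (measurable_sub_const z)
  rw [lintegral_mul_const _ hmeas]
  refine mul_le_of_le_one_left' ((setLIntegral_le_lintegral _ _).trans ?_)
  rw [lintegral_sub_right_eq_self (exponentialPDF r) z]
  rcases hr.eq_or_lt with rfl | hr
  · simp [exponentialPDF_eq]
  · exact (lintegral_exponentialPDF_eq_one hr).le

theorem ofReal_mul_enorm_integral_exp_mul_le {a t : ℝ} (ha : 0 ≤ a) (ht : 0 ≤ t) (f : ℝ → ℂ) :
    ENNReal.ofReal a * ‖∫ z in (0:ℝ)..t, ((Real.exp (-((t - z) * a)) : ℝ) : ℂ) * f z‖ₑ ≤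
      ∫⁻ z in Ioc 0 t, exponentialPDF a (t - z) * ‖f z‖ₑ := by
  rw [intervalIntegral.integral_of_le ht]
  refine (mul_le_mul_right (enorm_integral_le_lintegral_enorm _) _).trans_eq ?_
  rw [← lintegral_const_mul' _ _ ENNReal.ofReal_ne_top]
  refine setLIntegral_congr_fun measurableSet_Ioc fun z hz => ?_
  rw [exponentialPDF_of_nonneg (sub_nonneg.2 hz.2), enorm_mul, ← ofReal_norm,
    Complex.norm_real, Real.norm_of_nonneg (Real.exp_nonneg _), ← mul_assoc,
    ← ENNReal.ofReal_mul ha, mul_comm (t - z)]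

theorem abs_cross_le_norm_mul_norm (a b : EuclideanSpace ℝ (Fin 2)) :
    |a 0 * b 1 - a 1 * b 0| ≤ ‖a‖ * ‖b‖ := by
  refine abs_le_of_sq_le_sq ?_ (by positivity)
  rw [mul_pow, EuclideanSpace.real_norm_sq_eq, EuclideanSpace.real_norm_sq_eq]
  simp only [Fin.sum_univ_two]
  nlinarith [sq_nonneg (a 0 * b 0 + a 1 * b 1)]

theorem abs_cross_div_norm_le_norm_sub (ξ η : EuclideanSpace ℝ (Fin 2)) :
    |(ξ 0 * η 1 - ξ 1 * η 0) / ‖η‖| ≤ ‖ξ - η‖ := by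
  rcases eq_or_ne η 0 with rfl | hη
  · simp
  have hcross : ξ 0 * η 1 - ξ 1 * η 0 = (ξ - η) 0 * η 1 - (ξ - η) 1 * η 0 := by
    simp only [PiLp.sub_apply]; ring
  rw [abs_div, abs_norm, div_le_iff₀ (norm_pos_iff.2 hη), hcross]
  exact abs_cross_le_norm_mul_norm _ _

def qgnMajorant (g : E2 → ℂ) : E2 → ℝ≥0∞ :=
  (fun η => ‖g η‖ₑ) ⋆ₗ fun ξ => ‖ξ‖ₑ * ‖g ξ‖ₑ

theorem enorm_QGN_le (Θ : ℝ → E2 → ℂ) (z : ℝ) (ξ : E2) :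
    ‖QGN Θ z ξ‖ₑ ≤ qgnMajorant (Θ z) ξ := by
  rw [QGN, qgnMajorant, lconvolution_def]
  refine (enorm_integral_le_lintegral_enorm _).trans (lintegral_mono fun η => ?_)
  have hkernel : ‖(((ξ 0 * η 1 - ξ 1 * η 0) / ‖η‖ : ℝ) : ℂ)‖ₑ ≤ ‖ξ - η‖ₑ := by
    rw [← ofReal_norm, ← ofReal_norm, Complex.norm_real, Real.norm_eq_abs]
    exact ENNReal.ofReal_le_ofReal (abs_cross_div_norm_le_norm_sub ξ η)
  rw [neg_add_eq_sub, enorm_mul, enorm_mul, mul_comm ‖Θ z η‖ₑ]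
  gcongr

theorem measurable_Xnorm (σ : ℝ) {Θ : ℝ → E2 → ℂ} (hΘ : Measurable (Function.uncurry Θ)) :
    Measurable fun z => Xnorm σ (Θ z) := by
  have hΘ' : Measurable fun p : ℝ × E2 => Θ p.1 p.2 := hΘ
  exact Measurable.lintegral_prod_right'
    (f := fun p : ℝ × E2 => ENNReal.ofReal (‖p.2‖ ^ σ) * ‖Θ p.1 p.2‖₊) (by fun_prop)

theorem measurable_qgnMajorant {Θ : ℝ → E2 → ℂ} (hΘ : Measurable (Function.uncurry Θ)) :
    Measurable fun p : ℝ × E2 => qgnMajorant (Θ p.1) p.2 := by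
  have hΘ' : Measurable fun p : ℝ × E2 => Θ p.1 p.2 := hΘ
  simp only [qgnMajorant, lconvolution_def]
  exact Measurable.lintegral_prod_right' (f := fun q : (ℝ × E2) × E2 =>
    ‖Θ q.1.1 q.2‖ₑ * (‖-q.2 + q.1.2‖ₑ * ‖Θ q.1.1 (-q.2 + q.1.2)‖ₑ)) (by fun_prop)

theorem lintegral_qgnMajorant {g : E2 → ℂ} (hg : Measurable g) :
    ∫⁻ ξ, qgnMajorant g ξ = Xnorm 0 g * Xnorm 1 g := by
  rw [qgnMajorant, lintegral_lconvolution (by fun_prop) (by fun_prop)]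
  simp [Xnorm, enorm_eq_nnnorm]

theorem enorm_mul_enorm_integral_exp_mul_QGN_le (Θ : ℝ → E2 → ℂ) {t : ℝ} (ht : 0 ≤ t) (ξ : E2) :
    ‖ξ‖ₑ * ‖∫ z in (0:ℝ)..t, ((Real.exp (-((t - z) * ‖ξ‖)) : ℝ) : ℂ) * QGN Θ z ξ‖ₑ ≤
      ∫⁻ z in Ioc 0 t, exponentialPDF ‖ξ‖ (t - z) * qgnMajorant (Θ z) ξ := by
  rw [← ofReal_norm]
  exact (ofReal_mul_enorm_integral_exp_mul_le (norm_nonneg ξ) ht _).trans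
    (lintegral_mono fun z => mul_le_mul_right (enorm_QGN_le Θ z ξ) _)

theorem duhamel_X1_bound_general (T : ℝ)
    (Θ : ℝ → E2 → ℂ) (hmeas : Measurable (Function.uncurry Θ)) :
    (∫⁻ t in Set.Icc (0:ℝ) T, ∫⁻ ξ : E2, (‖ξ‖₊ : ℝ≥0∞) *
        ‖∫ z in (0:ℝ)..t, ((Real.exp (-((t - z) * ‖ξ‖)) : ℝ) : ℂ) * QGN Θ z ξ‖₊)
      ≤ (⨆ s ∈ Set.Icc (0:ℝ) T, Xnorm 0 (Θ s)) *
          ∫⁻ s in Set.Icc (0:ℝ) T, Xnorm 1 (Θ s) := by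
  set I := Icc (0:ℝ) T
  have hF : Measurable fun p : ℝ × E2 × ℝ =>
      exponentialPDF ‖p.2.1‖ (p.1 - p.2.2) * qgnMajorant (Θ p.2.2) p.2.1 := by
    have hpdf : Measurable fun p : ℝ × E2 × ℝ => exponentialPDF ‖p.2.1‖ (p.1 - p.2.2) :=
      measurable_uncurry_exponentialPDF.comp
        (measurable_snd.fst.norm.prodMk (measurable_fst.sub measurable_snd.snd))
    have hmaj : Measurable fun p : ℝ × E2 × ℝ => qgnMajorant (Θ p.2.2) p.2.1 :=
      (measurable_qgnMajorant hmeas).comp (measurable_snd.snd.prodMk measurable_snd.fst)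
    exact hpdf.mul hmaj
  simp only [← enorm_eq_nnnorm]
  calc _ ≤ ∫⁻ t in I, ∫⁻ ξ, ∫⁻ z in I, exponentialPDF ‖ξ‖ (t - z) * qgnMajorant (Θ z) ξ :=
        setLIntegral_mono' measurableSet_Icc fun t ht => lintegral_mono fun ξ =>
          (enorm_mul_enorm_integral_exp_mul_QGN_le Θ ht.1 ξ).trans
            (lintegral_mono_set (Ioc_subset_Icc_self.trans (Icc_subset_Icc_right ht.2)))
    _ = ∫⁻ z in I, ∫⁻ ξ, ∫⁻ t in I, exponentialPDF ‖ξ‖ (t - z) * qgnMajorant (Θ z) ξ :=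
        lintegral_lintegral_lintegral_reverse hF
    _ ≤ ∫⁻ z in I, ∫⁻ ξ, qgnMajorant (Θ z) ξ :=
        lintegral_mono fun z => lintegral_mono fun ξ =>
          setLIntegral_exponentialPDF_sub_mul_le I (norm_nonneg ξ) z _
    _ = ∫⁻ z in I, Xnorm 0 (Θ z) * Xnorm 1 (Θ z) :=
        lintegral_congr fun z => lintegral_qgnMajorant (hmeas.comp measurable_prodMk_left)
    _ ≤ ∫⁻ z in I, (⨆ s ∈ I, Xnorm 0 (Θ s)) * Xnorm 1 (Θ z) :=
        setLIntegral_mono' measurableSet_Icc fun z hz =>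
          mul_le_mul_left (le_biSup (fun s => Xnorm 0 (Θ s)) hz) _
    _ = _ := lintegral_const_mul _ (measurable_Xnorm 1 hmeas)

/-- Lemma 2.4: `L¹_T(X¹)` bound for the Duhamel term:
`∫₀^T ‖∫₀^t e^{-(t-z)|D|} N[Θ](z) dz‖_{X¹} dt ≤ (sup_{[0,T]}‖Θ‖_{X⁰})(∫₀^T ‖Θ‖_{X¹})`. -/
theorem duhamel_X1_bound (T : ℝ) (hT : 0 < T)
    (Θ : ℝ → E2 → ℂ) (hmeas : Measurable (Function.uncurry Θ))
    (hsup : (⨆ t ∈ Set.Icc (0:ℝ) T, Xnorm 0 (Θ t)) < ⊤)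
    (hint : (∫⁻ t in Set.Icc (0:ℝ) T, Xnorm 1 (Θ t)) < ⊤) :
    (∫⁻ t in Set.Icc (0:ℝ) T, ∫⁻ ξ : E2, (‖ξ‖₊ : ℝ≥0∞) *
        ‖∫ z in (0:ℝ)..t, ((Real.exp (-((t - z) * ‖ξ‖)) : ℝ) : ℂ) * QGN Θ z ξ‖₊)
      ≤ (⨆ s ∈ Set.Icc (0:ℝ) T, Xnorm 0 (Θ s)) *
          ∫⁻ s in Set.Icc (0:ℝ) T, Xnorm 1 (Θ s) :=
  duhamel_X1_bound_general T Θ hmeas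

end
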